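/- Let x = (x_1,...,x_M) be a vector of i.i.d. real random variables with mean 0, variance 1, and finite 8th moment, and for each M let B_M be a deterministic M×M real matrix with tr(B_M B_M^T) ≤ C·M^2 for a fixed constant C. Then (1/M^{3/2})( x^T B_M x − tr B_M ) → 0 almost surely as M → ∞. -/

import Mathlib

open MeasureTheory ProbabilityTheory Filter Matrix Finset
open scoped BigOperators Topology

/-!
Write `Q_n = ∑_{i,j<n} x_i a_ij x_j - ∑_{i<n} a_ii` as the sum of the increments
`Z_m = a_mm (x_m² - 1) + x_m ∑_{j<m} (a_mj + a_jm) x_j`. Since `x_m` is centred, has unit variance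
and is independent of `x_0, …, x_{m-1}`, we have `E[Q_m³ Z_m] = 0`; for such orthogonal increments,
expanding `(Q + Z)⁴` and using Cauchy–Schwarz on `E[Q² Z²]` gives
`√E(Q + Z)⁴ ≤ √E Q⁴ + 4 √E Z⁴`. The same bound applied to the linear form inside `Z_m` yields
`E Z_m⁴ ≲ (a_mm² + ∑_j (a_mj + a_jm)²)²`, hence `E Q_M⁴ ≲ (tr B_M B_Mᵀ)² ≤ C² M⁴`. The fourth
moment of `Y_M = M^{-3/2} Q_M` is therefore `O(M⁻²)`; so `∑_M Y_M⁴` is integrable, hence finite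
almost surely, and `Y_M → 0` almost surely.
-/

section

variable {Ω : Type*} [MeasurableSpace Ω] {μ : Measure Ω}

lemma abs_pow_mul_pow_le (a b : ℝ) (j k : ℕ) :
    |a ^ j * b ^ k| ≤ |a| ^ (j + k) + |b| ^ (j + k) := by
  rcases le_total |a| |b| with h | h
  · calc |a ^ j * b ^ k| = |a| ^ j * |b| ^ k := by rw [abs_mul, abs_pow, abs_pow]
      _ ≤ |b| ^ j * |b| ^ k := by gcongr
      _ ≤ |a| ^ (j + k) + |b| ^ (j + k) := by rw [← pow_add]; simp
  · calc |a ^ j * b ^ k| = |a| ^ j * |b| ^ k := by rw [abs_mul, abs_pow, abs_pow]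
      _ ≤ |a| ^ j * |a| ^ k := by gcongr
      _ ≤ |a| ^ (j + k) + |b| ^ (j + k) := by rw [← pow_add]; simp

lemma add_pow_four_le (a b : ℝ) : (a + b) ^ 4 ≤ 8 * a ^ 4 + 8 * b ^ 4 := by
  nlinarith [sq_nonneg (a - b), sq_nonneg (a + b), sq_nonneg (a ^ 2 - b ^ 2)]

lemma integrable_pow_mul_pow {S Z : Ω → ℝ} (hS : AEStronglyMeasurable S μ)
    (hZ : AEStronglyMeasurable Z μ) (hS4 : Integrable (fun ω => S ω ^ 4) μ)
    (hZ4 : Integrable (fun ω => Z ω ^ 4) μ) {j k : ℕ} (hjk : j + k = 4) :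
    Integrable (fun ω => S ω ^ j * Z ω ^ k) μ := by
  refine (hS4.add hZ4).mono' (by fun_prop) (ae_of_all _ fun ω => ?_)
  have h := abs_pow_mul_pow_le (S ω) (Z ω) j k
  rw [hjk, Even.pow_abs (by decide), Even.pow_abs (by decide)] at h
  exact h

lemma integrable_add_pow_four {S Z : Ω → ℝ} (hS : AEStronglyMeasurable S μ)
    (hZ : AEStronglyMeasurable Z μ) (hS4 : Integrable (fun ω => S ω ^ 4) μ)
    (hZ4 : Integrable (fun ω => Z ω ^ 4) μ) :
    Integrable (fun ω => (S ω + Z ω) ^ 4) μ :=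
  ((hS4.const_mul 8).add (hZ4.const_mul 8)).mono' (by fun_prop) (ae_of_all _ fun ω => by
    rw [Real.norm_eq_abs, abs_of_nonneg (by positivity)]
    exact add_pow_four_le _ _)

lemma integral_sq_mul_sq_le {S Z : Ω → ℝ} (hS : AEStronglyMeasurable S μ)
    (hZ : AEStronglyMeasurable Z μ) (hS4 : Integrable (fun ω => S ω ^ 4) μ)
    (hZ4 : Integrable (fun ω => Z ω ^ 4) μ) :
    ∫ ω, S ω ^ 2 * Z ω ^ 2 ∂μ ≤ √(∫ ω, S ω ^ 4 ∂μ) * √(∫ ω, Z ω ^ 4 ∂μ) := by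
  have hL2 {f : Ω → ℝ} (hf : AEStronglyMeasurable f μ) (hf4 : Integrable (fun ω => f ω ^ 4) μ) :
      MemLp (fun ω => f ω ^ 2) (ENNReal.ofReal 2) μ := by
    rw [ENNReal.ofReal_ofNat, memLp_two_iff_integrable_sq (by fun_prop)]
    simpa only [← pow_mul] using hf4
  have h := integral_mul_le_Lp_mul_Lq_of_nonneg Real.HolderConjugate.two_two
    (ae_of_all _ fun ω => sq_nonneg (S ω)) (ae_of_all _ fun ω => sq_nonneg (Z ω))
    (hL2 hS hS4) (hL2 hZ hZ4)
  have h2 (t : ℝ) : (t ^ 2) ^ (2 : ℝ) = t ^ 4 := by norm_cast; ring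
  simpa only [h2, ← Real.sqrt_eq_rpow] using h

lemma sqrt_integral_add_pow_four_le {S Z : Ω → ℝ} (hS : AEStronglyMeasurable S μ)
    (hZ : AEStronglyMeasurable Z μ) (hS4 : Integrable (fun ω => S ω ^ 4) μ)
    (hZ4 : Integrable (fun ω => Z ω ^ 4) μ) (horth : ∫ ω, S ω ^ 3 * Z ω ∂μ = 0) :
    √(∫ ω, (S ω + Z ω) ^ 4 ∂μ) ≤ √(∫ ω, S ω ^ 4 ∂μ) + 4 * √(∫ ω, Z ω ^ 4 ∂μ) := by
  have h31 : Integrable (fun ω => S ω ^ 3 * Z ω) μ := by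
    simpa only [pow_one] using integrable_pow_mul_pow hS hZ hS4 hZ4 (j := 3) (k := 1) rfl
  have h22 := integrable_pow_mul_pow hS hZ hS4 hZ4 (j := 2) (k := 2) rfl
  have hA : Integrable (fun ω => S ω ^ 4 + 4 * (S ω ^ 3 * Z ω)) μ := hS4.add (h31.const_mul 4)
  have hB : Integrable (fun ω => 8 * (S ω ^ 2 * Z ω ^ 2) + 3 * Z ω ^ 4) μ :=
    (h22.const_mul 8).add (hZ4.const_mul 3)
  have hCS := integral_sq_mul_sq_le hS hZ hS4 hZ4
  set α := ∫ ω, S ω ^ 4 ∂μ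
  set β := ∫ ω, Z ω ^ 4 ∂μ
  have hα : 0 ≤ α := integral_nonneg fun ω => by positivity
  have hβ : 0 ≤ β := integral_nonneg fun ω => by positivity
  rw [Real.sqrt_le_left (by positivity)]
  calc ∫ ω, (S ω + Z ω) ^ 4 ∂μ
      ≤ ∫ ω, (S ω ^ 4 + 4 * (S ω ^ 3 * Z ω) + (8 * (S ω ^ 2 * Z ω ^ 2) + 3 * Z ω ^ 4)) ∂μ := by
        -- `4 S Z³ ≤ 2 S² Z² + 2 Z⁴` leaves only even terms besides the orthogonal one
        refine integral_mono (integrable_add_pow_four hS hZ hS4 hZ4) (hA.add hB) fun ω => ?_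
        nlinarith [sq_nonneg (S ω * Z ω - Z ω ^ 2)]
    _ = α + 8 * ∫ ω, S ω ^ 2 * Z ω ^ 2 ∂μ + 3 * β := by
        rw [integral_add hA hB, integral_add hS4 (h31.const_mul 4),
          integral_add (h22.const_mul 8) (hZ4.const_mul 3),
          integral_const_mul, integral_const_mul, integral_const_mul, horth]
        ring
    _ ≤ (√α + 4 * √β) ^ 2 := by
        nlinarith [Real.sq_sqrt hα, Real.sq_sqrt hβ, Real.sqrt_nonneg α, Real.sqrt_nonneg β]

lemma integrable_sum_pow_four {D : ℕ → Ω → ℝ} (hD : ∀ n, AEStronglyMeasurable (D n) μ)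
    (hD4 : ∀ n, Integrable (fun ω => D n ω ^ 4) μ) (n : ℕ) :
    Integrable (fun ω => (∑ m ∈ range n, D m ω) ^ 4) μ := by
  induction n with
  | zero => simp
  | succ n ih =>
    simp only [sum_range_succ]
    exact integrable_add_pow_four (Finset.aestronglyMeasurable_fun_sum _ fun m _ => hD m) (hD n)
      ih (hD4 n)

lemma sqrt_integral_sum_pow_four_le {D : ℕ → Ω → ℝ} (hD : ∀ n, AEStronglyMeasurable (D n) μ)
    (hD4 : ∀ n, Integrable (fun ω => D n ω ^ 4) μ)
    (horth : ∀ n, ∫ ω, (∑ m ∈ range n, D m ω) ^ 3 * D n ω ∂μ = 0) (n : ℕ) :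
    √(∫ ω, (∑ m ∈ range n, D m ω) ^ 4 ∂μ) ≤ 4 * ∑ m ∈ range n, √(∫ ω, D m ω ^ 4 ∂μ) := by
  induction n with
  | zero => simp
  | succ n ih =>
    simp only [sum_range_succ]
    calc _ ≤ √(∫ ω, (∑ m ∈ range n, D m ω) ^ 4 ∂μ) + 4 * √(∫ ω, D n ω ^ 4 ∂μ) :=
          sqrt_integral_add_pow_four_le (Finset.aestronglyMeasurable_fun_sum _ fun m _ => hD m)
            (hD n) (integrable_sum_pow_four hD hD4 n) (hD4 n) (horth n)
      _ ≤ _ := by linarith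

lemma MeasureTheory.Integrable.pow_of_abs_pow [IsFiniteMeasure μ] {f : Ω → ℝ}
    (hf : AEStronglyMeasurable f μ)
    {k n : ℕ} (hkn : k ≤ n) (h : Integrable (fun ω => |f ω| ^ n) μ) :
    Integrable (fun ω => f ω ^ k) μ := by
  have hk := integrable_norm_rpow_of_le hf k.cast_nonneg n.cast_nonneg (by exact_mod_cast hkn)
    (by simpa only [Real.rpow_natCast, Real.norm_eq_abs] using h)
  refine hk.mono' (by fun_prop) (ae_of_all _ fun ω => ?_)
  simp

lemma integrable_sq_sub_one_pow_four [IsFiniteMeasure μ] {f : Ω → ℝ}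
    (hf : AEStronglyMeasurable f μ) (h8 : Integrable (fun ω => |f ω| ^ 8) μ) :
    Integrable (fun ω => (f ω ^ 2 - 1) ^ 4) μ := by
  have hf8 : Integrable (fun ω => (f ω ^ 2) ^ 4) μ := by
    simpa only [← pow_mul] using h8.pow_of_abs_pow hf le_rfl
  simpa only [sub_eq_add_neg] using
    integrable_add_pow_four (by fun_prop) aestronglyMeasurable_const hf8 (integrable_const _)

lemma ProbabilityTheory.iIndepFun.indepFun_comp_of_dependsOn {ι β γ : Type*}
    [MeasurableSpace β] [Nonempty β] [MeasurableSpace γ] {x : ι → Ω → β}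
    (hx : iIndepFun x μ) (hmeas : ∀ i, Measurable (x i)) {s : Finset ι} {i : ι} (hi : i ∉ s)
    {φ : (ι → β) → γ} (hφ : Measurable φ) (hdep : DependsOn φ s) :
    IndepFun (fun ω => φ (fun j => x j ω)) (x i) μ := by
  classical
  let extend (u : s → β) (j : ι) : β := if h : j ∈ s then u ⟨j, h⟩ else Classical.arbitrary β
  have hextend : Measurable extend :=
    measurable_pi_lambda _ fun j => by
      by_cases h : j ∈ s <;> simp only [extend, h, dite_true, dite_false] <;> fun_prop
  have h := (hx.indepFun_finset s {i} (disjoint_singleton_right.2 hi) hmeas).comp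
    (hφ.comp hextend) (measurable_pi_apply ⟨i, mem_singleton_self i⟩)
  convert h using 1
  · funext ω
    exact hdep fun j hj => by simp [extend, Finset.mem_coe.1 hj]
  · rfl

lemma ProbabilityTheory.iIndepFun.indepFun_comp_range {x : ℕ → Ω → ℝ} (hx : iIndepFun x μ)
    (hmeas : ∀ i, Measurable (x i)) {n : ℕ} {φ : (ℕ → ℝ) → ℝ} (hφ : Measurable φ)
    (hdep : DependsOn φ (range n)) {g : ℝ → ℝ} (hg : Measurable g) :
    IndepFun (fun ω => φ (fun i => x i ω)) (fun ω => g (x n ω)) μ :=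
  (hx.indepFun_comp_of_dependsOn hmeas (notMem_range_self (n := n)) hφ hdep).comp measurable_id hg

lemma ProbabilityTheory.iIndepFun.integral_comp_mul_eq_zero {x : ℕ → Ω → ℝ} (hx : iIndepFun x μ)
    (hmeas : ∀ i, Measurable (x i)) {n : ℕ} {φ : (ℕ → ℝ) → ℝ} (hφ : Measurable φ)
    (hdep : DependsOn φ (range n)) {g : ℝ → ℝ} (hg : Measurable g)
    (hg0 : ∫ ω, g (x n ω) ∂μ = 0) :
    ∫ ω, φ (fun i => x i ω) * g (x n ω) ∂μ = 0 := by
  rw [← mul_zero (∫ ω, φ (fun i => x i ω) ∂μ), ← hg0]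
  exact (hx.indepFun_comp_range hmeas hφ hdep hg).integral_mul_eq_mul_integral
    (hφ.comp (measurable_pi_lambda _ hmeas)).aestronglyMeasurable
    (hg.comp (hmeas n)).aestronglyMeasurable

end

def linForm (b : ℕ → ℝ) (n : ℕ) (v : ℕ → ℝ) : ℝ := ∑ j ∈ range n, b j * v j

@[fun_prop]
lemma measurable_linForm (b : ℕ → ℝ) (n : ℕ) : Measurable (linForm b n) := by
  unfold linForm; fun_prop

lemma dependsOn_linForm (b : ℕ → ℝ) (n : ℕ) : DependsOn (linForm b n) (range n) :=
  fun v w h => sum_congr rfl fun j hj => by rw [h j hj]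

def centeredQuadForm (a : ℕ → ℕ → ℝ) (n : ℕ) (v : ℕ → ℝ) : ℝ :=
  ∑ i ∈ range n, ∑ j ∈ range n, v i * a i j * v j - ∑ i ∈ range n, a i i

def quadFormIncrement (a : ℕ → ℕ → ℝ) (n : ℕ) (v : ℕ → ℝ) : ℝ :=
  a n n * (v n ^ 2 - 1) + v n * linForm (fun j => a n j + a j n) n v

lemma centeredQuadForm_succ (a : ℕ → ℕ → ℝ) (n : ℕ) (v : ℕ → ℝ) :
    centeredQuadForm a (n + 1) v = centeredQuadForm a n v + quadFormIncrement a n v := by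
  simp only [centeredQuadForm, quadFormIncrement, linForm, sum_range_succ, sum_add_distrib,
    mul_sum, mul_add, add_mul]
  rw [sum_congr rfl fun j _ => (mul_assoc (v n) (a n j) (v j)),
    sum_congr rfl fun i _ => show v i * a i n * v n = v n * (a i n * v i) by ring]
  ring

lemma centeredQuadForm_eq_sum (a : ℕ → ℕ → ℝ) (n : ℕ) (v : ℕ → ℝ) :
    centeredQuadForm a n v = ∑ m ∈ range n, quadFormIncrement a m v := by
  induction n with
  | zero => simp [centeredQuadForm]
  | succ n ih => rw [centeredQuadForm_succ, ih, sum_range_succ]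

@[fun_prop]
lemma measurable_centeredQuadForm (a : ℕ → ℕ → ℝ) (n : ℕ) : Measurable (centeredQuadForm a n) := by
  unfold centeredQuadForm; fun_prop

@[fun_prop]
lemma measurable_quadFormIncrement (a : ℕ → ℕ → ℝ) (n : ℕ) :
    Measurable (quadFormIncrement a n) := by
  unfold quadFormIncrement; fun_prop

lemma dependsOn_centeredQuadForm (a : ℕ → ℕ → ℝ) (n : ℕ) :
    DependsOn (centeredQuadForm a n) (range n) := fun v w h => by
  simp only [centeredQuadForm]
  congr 1
  exact sum_congr rfl fun i hi => sum_congr rfl fun j hj => by rw [h i hi, h j hj]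

lemma sum_increment_weights_le (a : ℕ → ℕ → ℝ) (n : ℕ) :
    ∑ m ∈ range n, (a m m ^ 2 + ∑ j ∈ range m, (a m j + a j m) ^ 2)
      ≤ 2 * ∑ i ∈ range n, ∑ j ∈ range n, a i j ^ 2 := by
  induction n with
  | zero => simp
  | succ n ih =>
    have hstep : ∑ j ∈ range n, (a n j + a j n) ^ 2
        ≤ 2 * ∑ j ∈ range n, a n j ^ 2 + 2 * ∑ i ∈ range n, a i n ^ 2 := by
      rw [mul_sum, mul_sum, ← sum_add_distrib]
      exact sum_le_sum fun j _ => by nlinarith [sq_nonneg (a n j - a j n)]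
    calc _ = ∑ m ∈ range n, (a m m ^ 2 + ∑ j ∈ range m, (a m j + a j m) ^ 2)
          + (a n n ^ 2 + ∑ j ∈ range n, (a n j + a j n) ^ 2) := sum_range_succ _ n
      _ ≤ 2 * (∑ i ∈ range n, ∑ j ∈ range n, a i j ^ 2 + ∑ j ∈ range n, a n j ^ 2
          + (∑ i ∈ range n, a i n ^ 2 + a n n ^ 2)) := by nlinarith [sq_nonneg (a n n)]
      _ = _ := by simp only [sum_range_succ, sum_add_distrib]

section FourthMoments

variable {Ω : Type*} [MeasurableSpace Ω] {μ : Measure Ω} {x : ℕ → Ω → ℝ}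

lemma integrable_linForm_pow_four (hmeas : ∀ i, Measurable (x i))
    (hx4 : ∀ i, Integrable (fun ω => x i ω ^ 4) μ) (b : ℕ → ℝ) (n : ℕ) :
    Integrable (fun ω => linForm b n (fun i => x i ω) ^ 4) μ :=
  integrable_sum_pow_four (fun j => ((hmeas j).const_mul (b j)).aestronglyMeasurable)
    (fun j => by simpa only [mul_pow] using (hx4 j).const_mul (b j ^ 4)) n

lemma integral_linForm_pow_four_le (hmeas : ∀ i, Measurable (x i)) (hindep : iIndepFun x μ)
    (hmean : ∀ i, ∫ ω, x i ω ∂μ = 0) (hx4 : ∀ i, Integrable (fun ω => x i ω ^ 4) μ) {m₄ : ℝ}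
    (hm₄ : ∀ i, ∫ ω, x i ω ^ 4 ∂μ ≤ m₄) (b : ℕ → ℝ) (n : ℕ) :
    ∫ ω, linForm b n (fun i => x i ω) ^ 4 ∂μ ≤ 16 * m₄ * (∑ j ∈ range n, b j ^ 2) ^ 2 := by
  have hm₄0 : 0 ≤ m₄ := (integral_nonneg fun ω => by positivity).trans (hm₄ 0)
  have hterm (j : ℕ) : √(∫ ω, (b j * x j ω) ^ 4 ∂μ) ≤ b j ^ 2 * √m₄ := by
    simp_rw [mul_pow, integral_const_mul]
    calc √(b j ^ 4 * ∫ ω, x j ω ^ 4 ∂μ) ≤ √(b j ^ 4 * m₄) := by gcongr; exact hm₄ j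
      _ = b j ^ 2 * √m₄ := by
        rw [Real.sqrt_mul (by positivity), show b j ^ 4 = (b j ^ 2) ^ 2 by ring,
          Real.sqrt_sq (by positivity)]
  have horth (k : ℕ) : ∫ ω, (∑ j ∈ range k, b j * x j ω) ^ 3 * (b k * x k ω) ∂μ = 0 :=
    hindep.integral_comp_mul_eq_zero hmeas ((measurable_linForm b k).pow_const 3)
      (fun v w h => congrArg (· ^ 3) (dependsOn_linForm b k h)) (measurable_const_mul (b k))
      (by rw [integral_const_mul, hmean, mul_zero])
  have h := sqrt_integral_sum_pow_four_le
    (fun j => ((hmeas j).const_mul (b j)).aestronglyMeasurable)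
    (fun j => by simpa only [mul_pow] using (hx4 j).const_mul (b j ^ 4)) horth n
  have hbound : √(∫ ω, linForm b n (fun i => x i ω) ^ 4 ∂μ)
      ≤ 4 * ((∑ j ∈ range n, b j ^ 2) * √m₄) := by
    refine h.trans ?_
    rw [sum_mul]
    gcongr with j
    exact hterm j
  calc _ ≤ (4 * ((∑ j ∈ range n, b j ^ 2) * √m₄)) ^ 2 :=
        (Real.sqrt_le_left (by positivity)).1 hbound
    _ = 16 * m₄ * (∑ j ∈ range n, b j ^ 2) ^ 2 := by
        rw [mul_pow, mul_pow, Real.sq_sqrt hm₄0]; ring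

lemma indepFun_linForm_pow_four (hmeas : ∀ i, Measurable (x i)) (hindep : iIndepFun x μ)
    (b : ℕ → ℝ) (n : ℕ) :
    IndepFun (fun ω => linForm b n (fun i => x i ω) ^ 4) (fun ω => x n ω ^ 4) μ :=
  hindep.indepFun_comp_range hmeas ((measurable_linForm b n).pow_const 4)
    (fun _ _ h => congrArg (· ^ 4) (dependsOn_linForm b n h)) (measurable_id.pow_const 4)

variable [IsProbabilityMeasure μ]

lemma integrable_quadFormIncrement_pow_four (hmeas : ∀ i, Measurable (x i))
    (hindep : iIndepFun x μ) (hx8 : ∀ i, Integrable (fun ω => |x i ω| ^ 8) μ)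
    (a : ℕ → ℕ → ℝ) (n : ℕ) :
    Integrable (fun ω => quadFormIncrement a n (fun i => x i ω) ^ 4) μ := by
  set b := fun j => a n j + a j n
  have hx4 (i : ℕ) : Integrable (fun ω => x i ω ^ 4) μ :=
    (hx8 i).pow_of_abs_pow (hmeas i).aestronglyMeasurable (by norm_num)
  have hW4x4 : Integrable (fun ω => linForm b n (fun i => x i ω) ^ 4 * x n ω ^ 4) μ :=
    (indepFun_linForm_pow_four hmeas hindep b n).integrable_mul
      (integrable_linForm_pow_four hmeas hx4 b n) (hx4 n)
  refine integrable_add_pow_four (by fun_prop) (by fun_prop) ?_ ?_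
  · simpa only [mul_pow] using
      (integrable_sq_sub_one_pow_four (hmeas n).aestronglyMeasurable (hx8 n)).const_mul (a n n ^ 4)
  · simpa only [mul_pow, mul_comm] using hW4x4

lemma integral_quadFormIncrement_pow_four_le (hmeas : ∀ i, Measurable (x i))
    (hindep : iIndepFun x μ) (hmean : ∀ i, ∫ ω, x i ω ∂μ = 0)
    (hx8 : ∀ i, Integrable (fun ω => |x i ω| ^ 8) μ) {m₄ c : ℝ}
    (hm₄ : ∀ i, ∫ ω, x i ω ^ 4 ∂μ ≤ m₄) (hc : ∀ i, ∫ ω, (x i ω ^ 2 - 1) ^ 4 ∂μ ≤ c)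
    (a : ℕ → ℕ → ℝ) (n : ℕ) :
    ∫ ω, quadFormIncrement a n (fun i => x i ω) ^ 4 ∂μ
      ≤ (8 * c + 128 * m₄ ^ 2) * (a n n ^ 2 + ∑ j ∈ range n, (a n j + a j n) ^ 2) ^ 2 := by
  set b := fun j => a n j + a j n
  have hx4 (i : ℕ) : Integrable (fun ω => x i ω ^ 4) μ :=
    (hx8 i).pow_of_abs_pow (hmeas i).aestronglyMeasurable (by norm_num)
  have hindep4 := indepFun_linForm_pow_four hmeas hindep b n
  have hW4 := integrable_linForm_pow_four hmeas hx4 b n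
  have hy4 := integrable_sq_sub_one_pow_four (hmeas n).aestronglyMeasurable (hx8 n)
  have hW4x4 : Integrable (fun ω => linForm b n (fun i => x i ω) ^ 4 * x n ω ^ 4) μ :=
    hindep4.integrable_mul hW4 (hx4 n)
  have hm₄0 : 0 ≤ m₄ := (integral_nonneg fun ω => by positivity).trans (hm₄ 0)
  have hW := integral_linForm_pow_four_le hmeas hindep hmean hx4 hm₄ b n
  set s := ∑ j ∈ range n, b j ^ 2
  have hs : 0 ≤ s := by positivity
  calc ∫ ω, quadFormIncrement a n (fun i => x i ω) ^ 4 ∂μ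
      ≤ ∫ ω, (8 * a n n ^ 4 * (x n ω ^ 2 - 1) ^ 4
          + 8 * (linForm b n (fun i => x i ω) ^ 4 * x n ω ^ 4)) ∂μ := by
        refine integral_mono (integrable_quadFormIncrement_pow_four hmeas hindep hx8 a n)
          ((hy4.const_mul _).add (hW4x4.const_mul _)) fun ω => ?_
        have := add_pow_four_le (a n n * (x n ω ^ 2 - 1)) (x n ω * linForm b n (fun i => x i ω))
        simp only [quadFormIncrement, mul_pow] at this ⊢
        linarith
    _ = 8 * a n n ^ 4 * ∫ ω, (x n ω ^ 2 - 1) ^ 4 ∂μ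
          + 8 * ((∫ ω, linForm b n (fun i => x i ω) ^ 4 ∂μ) * ∫ ω, x n ω ^ 4 ∂μ) := by
        rw [integral_add (hy4.const_mul _) (hW4x4.const_mul _), integral_const_mul,
          integral_const_mul]
        congr 2
        exact hindep4.integral_mul_eq_mul_integral hW4.aestronglyMeasurable
          (hx4 n).aestronglyMeasurable
    _ ≤ 8 * a n n ^ 4 * c + 8 * ((16 * m₄ * s ^ 2) * m₄) := by
        gcongr
        · exact hc n
        · exact hm₄ n
    _ ≤ (8 * c + 128 * m₄ ^ 2) * (a n n ^ 2 + s) ^ 2 := by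
        have hc0 : 0 ≤ c := (integral_nonneg fun ω => by positivity).trans (hc 0)
        nlinarith [mul_nonneg hc0 (mul_nonneg (sq_nonneg (a n n)) hs),
          mul_nonneg (sq_nonneg m₄) (mul_nonneg (sq_nonneg (a n n)) hs),
          mul_nonneg hc0 (sq_nonneg s),
          mul_nonneg (sq_nonneg m₄) (pow_nonneg (sq_nonneg (a n n)) 2)]

lemma integrable_centeredQuadForm_pow_four (hmeas : ∀ i, Measurable (x i))
    (hindep : iIndepFun x μ) (hx8 : ∀ i, Integrable (fun ω => |x i ω| ^ 8) μ)
    (a : ℕ → ℕ → ℝ) (n : ℕ) :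
    Integrable (fun ω => centeredQuadForm a n (fun i => x i ω) ^ 4) μ := by
  simp_rw [centeredQuadForm_eq_sum]
  exact integrable_sum_pow_four (fun m => by apply Measurable.aestronglyMeasurable; fun_prop)
    (integrable_quadFormIncrement_pow_four hmeas hindep hx8 a) n

lemma integral_centeredQuadForm_pow_three_mul_quadFormIncrement (hmeas : ∀ i, Measurable (x i))
    (hindep : iIndepFun x μ) (hmean : ∀ i, ∫ ω, x i ω ∂μ = 0)
    (hvar : ∀ i, ∫ ω, x i ω ^ 2 ∂μ = 1) (hx8 : ∀ i, Integrable (fun ω => |x i ω| ^ 8) μ)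
    (a : ℕ → ℕ → ℝ) (n : ℕ) :
    ∫ ω, centeredQuadForm a n (fun i => x i ω) ^ 3 * quadFormIncrement a n (fun i => x i ω) ∂μ
      = 0 := by
  set b := fun j => a n j + a j n
  set Q := fun ω => centeredQuadForm a n (fun i => x i ω)
  set W := fun ω => linForm b n (fun i => x i ω)
  have hx4 (i : ℕ) : Integrable (fun ω => x i ω ^ 4) μ :=
    (hx8 i).pow_of_abs_pow (hmeas i).aestronglyMeasurable (by norm_num)
  have hQ4 := integrable_centeredQuadForm_pow_four hmeas hindep hx8 a n
  have hdepQ3 : DependsOn (fun v => centeredQuadForm a n v ^ 3) (range n) :=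
    fun v w h => congrArg (· ^ 3) (dependsOn_centeredQuadForm a n h)
  have hdepQ3W : DependsOn (fun v => centeredQuadForm a n v ^ 3 * linForm b n v) (range n) :=
    fun v w h => by simp only [dependsOn_centeredQuadForm a n h, dependsOn_linForm b n h]
  have hQ : AEStronglyMeasurable Q μ := by apply Measurable.aestronglyMeasurable; fun_prop
  have hW : AEStronglyMeasurable W μ := by apply Measurable.aestronglyMeasurable; fun_prop
  have hQ3y : Integrable (fun ω => Q ω ^ 3 * (x n ω ^ 2 - 1)) μ := by
    simpa only [pow_one] using integrable_pow_mul_pow hQ (by fun_prop) hQ4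
      (integrable_sq_sub_one_pow_four (hmeas n).aestronglyMeasurable (hx8 n)) (j := 3) (k := 1) rfl
  have hQ3Wx : Integrable (fun ω => Q ω ^ 3 * W ω * x n ω) μ := by
    refine (hindep.indepFun_comp_range hmeas (by fun_prop) hdepQ3W measurable_id).integrable_mul
      ?_ ((hx8 n).pow_of_abs_pow (hmeas n).aestronglyMeasurable (k := 1) (by norm_num) |>.congr ?_)
    · simpa only [pow_one] using integrable_pow_mul_pow hQ hW hQ4
        (integrable_linForm_pow_four hmeas hx4 b n) (j := 3) (k := 1) rfl
    · simp
  have hy : ∫ ω, (x n ω ^ 2 - 1) ∂μ = 0 := by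
    rw [integral_sub ((hx8 n).pow_of_abs_pow (hmeas n).aestronglyMeasurable (by norm_num))
      (integrable_const 1), hvar n]
    simp
  calc ∫ ω, Q ω ^ 3 * quadFormIncrement a n (fun i => x i ω) ∂μ
      = ∫ ω, (a n n * (Q ω ^ 3 * (x n ω ^ 2 - 1)) + Q ω ^ 3 * W ω * x n ω) ∂μ := by
        congr 1 with ω
        simp only [quadFormIncrement]
        ring
    _ = 0 := by
        have h1 : ∫ ω, Q ω ^ 3 * (x n ω ^ 2 - 1) ∂μ = 0 :=
          hindep.integral_comp_mul_eq_zero hmeas (by fun_prop) hdepQ3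
            (g := fun t => t ^ 2 - 1) (by fun_prop) hy
        have h2 : ∫ ω, Q ω ^ 3 * W ω * x n ω ∂μ = 0 :=
          hindep.integral_comp_mul_eq_zero hmeas (by fun_prop) hdepQ3W measurable_id (hmean n)
        rw [integral_add (hQ3y.const_mul _) hQ3Wx, integral_const_mul, h1, h2]
        simp

lemma integral_centeredQuadForm_pow_four_le (hmeas : ∀ i, Measurable (x i))
    (hindep : iIndepFun x μ) (hmean : ∀ i, ∫ ω, x i ω ∂μ = 0)
    (hvar : ∀ i, ∫ ω, x i ω ^ 2 ∂μ = 1) (hx8 : ∀ i, Integrable (fun ω => |x i ω| ^ 8) μ)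
    {m₄ c : ℝ} (hm₄ : ∀ i, ∫ ω, x i ω ^ 4 ∂μ ≤ m₄) (hc : ∀ i, ∫ ω, (x i ω ^ 2 - 1) ^ 4 ∂μ ≤ c)
    (a : ℕ → ℕ → ℝ) (n : ℕ) :
    ∫ ω, centeredQuadForm a n (fun i => x i ω) ^ 4 ∂μ
      ≤ 64 * (8 * c + 128 * m₄ ^ 2) * (∑ i ∈ range n, ∑ j ∈ range n, a i j ^ 2) ^ 2 := by
  set κ := 8 * c + 128 * m₄ ^ 2
  have hκ : 0 ≤ κ := by
    have := (integral_nonneg fun ω => by positivity).trans (hc 0)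
    positivity
  have hincr (m : ℕ) : √(∫ ω, quadFormIncrement a m (fun i => x i ω) ^ 4 ∂μ)
      ≤ √κ * (a m m ^ 2 + ∑ j ∈ range m, (a m j + a j m) ^ 2) := by
    rw [← Real.sqrt_sq (by positivity : 0 ≤ a m m ^ 2 + ∑ j ∈ range m, (a m j + a j m) ^ 2),
      ← Real.sqrt_mul hκ]
    exact Real.sqrt_le_sqrt
      (integral_quadFormIncrement_pow_four_le hmeas hindep hmean hx8 hm₄ hc a m)
  have hsum := sqrt_integral_sum_pow_four_le
    (fun m => by apply Measurable.aestronglyMeasurable; fun_prop)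
    (integrable_quadFormIncrement_pow_four hmeas hindep hx8 a)
    (fun k => by simpa only [centeredQuadForm_eq_sum] using
      integral_centeredQuadForm_pow_three_mul_quadFormIncrement hmeas hindep hmean hvar hx8 a k) n
  simp only [← centeredQuadForm_eq_sum] at hsum
  have hbound : √(∫ ω, centeredQuadForm a n (fun i => x i ω) ^ 4 ∂μ)
      ≤ 8 * √κ * ∑ i ∈ range n, ∑ j ∈ range n, a i j ^ 2 := by
    calc _ ≤ 4 * ∑ m ∈ range n, √κ * (a m m ^ 2 + ∑ j ∈ range m, (a m j + a j m) ^ 2) :=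
          hsum.trans (by gcongr with m; exact hincr m)
      _ ≤ 4 * (√κ * (2 * ∑ i ∈ range n, ∑ j ∈ range n, a i j ^ 2)) := by
          rw [← mul_sum]; gcongr; exact sum_increment_weights_le a n
      _ = _ := by ring
  calc _ ≤ (8 * √κ * ∑ i ∈ range n, ∑ j ∈ range n, a i j ^ 2) ^ 2 :=
        (Real.sqrt_le_left (by positivity)).1 hbound
    _ = _ := by rw [mul_pow, mul_pow, Real.sq_sqrt hκ]; ring

end FourthMoments

section AlmostSure

variable {Ω : Type*} [MeasurableSpace Ω] {μ : Measure Ω}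

lemma ae_tendsto_zero_of_summable_integral_norm {E : Type*} [NormedAddCommGroup E]
    {f : ℕ → Ω → E} (hf : ∀ n, Integrable (f n) μ)
    (hsum : Summable fun n => ∫ ω, ‖f n ω‖ ∂μ) :
    ∀ᵐ ω ∂μ, Tendsto (fun n => f n ω) atTop (𝓝 0) := by
  have h := summable_norm_of_tsum_eLpNorm_ne_top le_rfl (fun n => (hf n).aestronglyMeasurable)
    (p := 1) ?_
  · filter_upwards [h] with ω hω
    exact tendsto_zero_iff_norm_tendsto_zero.2 hω.tendsto_atTop_zero
  · simp_rw [eLpNorm_one_eq_lintegral_enorm, ← ofReal_integral_norm_eq_lintegral_enorm (hf _)]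
    rw [← ENNReal.ofReal_tsum_of_nonneg (fun n => integral_nonneg fun ω => norm_nonneg _) hsum]
    exact ENNReal.ofReal_ne_top

lemma tendsto_zero_of_tendsto_pow_zero {α R : Type*} [NormedDivisionRing R] {l : Filter α}
    {f : α → R} {n : ℕ} (hn : n ≠ 0) (h : Tendsto (fun a => f a ^ n) l (𝓝 0)) :
    Tendsto f l (𝓝 0) := by
  rw [Metric.tendsto_nhds] at h ⊢
  intro ε hε
  filter_upwards [h (ε ^ n) (pow_pos hε n)] with a ha
  rw [dist_zero_right, norm_pow] at ha
  rw [dist_zero_right]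
  exact (pow_lt_pow_iff_left₀ (norm_nonneg _) hε.le hn).1 ha

lemma ae_tendsto_zero_of_integral_pow_four_le_summable {Y : ℕ → Ω → ℝ}
    (hY4 : ∀ n, Integrable (fun ω => Y n ω ^ 4) μ) {u : ℕ → ℝ} (hu : Summable u)
    (hbound : ∀ n, ∫ ω, Y n ω ^ 4 ∂μ ≤ u n) :
    ∀ᵐ ω ∂μ, Tendsto (fun n => Y n ω) atTop (𝓝 0) := by
  have hnorm (n : ℕ) : ∫ ω, ‖Y n ω ^ 4‖ ∂μ = ∫ ω, Y n ω ^ 4 ∂μ := by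
    simp_rw [Real.norm_eq_abs, abs_pow, Even.pow_abs (by decide : Even 4)]
  have hsum : Summable fun n => ∫ ω, ‖Y n ω ^ 4‖ ∂μ :=
    hu.of_nonneg_of_le (fun n => integral_nonneg fun ω => norm_nonneg _)
      fun n => (hnorm n).trans_le (hbound n)
  filter_upwards [ae_tendsto_zero_of_summable_integral_norm hY4 hsum] with ω hω
  exact tendsto_zero_of_tendsto_pow_zero four_ne_zero hω

lemma integral_one_div_rpow_three_halves_mul_pow_four_le {Q : Ω → ℝ} {K : ℝ} (M : ℕ)
    (hQ : ∫ ω, Q ω ^ 4 ∂μ ≤ K * (M : ℝ) ^ 4) :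
    ∫ ω, (1 / (M : ℝ) ^ ((3 : ℝ) / 2) * Q ω) ^ 4 ∂μ ≤ K * (1 / (M : ℝ) ^ 2) := by
  have hscale : (1 / (M : ℝ) ^ ((3 : ℝ) / 2)) ^ 4 = 1 / (M : ℝ) ^ 6 := by
    rw [div_pow, one_pow, ← Real.rpow_natCast, ← Real.rpow_mul M.cast_nonneg]
    norm_num
  simp_rw [mul_pow, integral_const_mul, hscale]
  calc _ ≤ 1 / (M : ℝ) ^ 6 * (K * (M : ℝ) ^ 4) := by gcongr
    _ = K * (1 / (M : ℝ) ^ 2) := by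
      rcases M.eq_zero_or_pos with rfl | hM
      · simp
      · field_simp

end AlmostSure

def natIndexed {M : ℕ} (B : Matrix (Fin M) (Fin M) ℝ) (i j : ℕ) : ℝ :=
  if h : i < M ∧ j < M then B ⟨i, h.1⟩ ⟨j, h.2⟩ else 0

lemma centeredQuadForm_natIndexed {M : ℕ} (B : Matrix (Fin M) (Fin M) ℝ) (v : ℕ → ℝ) :
    centeredQuadForm (natIndexed B) M v
      = ∑ i : Fin M, ∑ j : Fin M, v i * B i j * v j - Matrix.trace B := by
  simp [centeredQuadForm, natIndexed, Finset.sum_range, Matrix.trace]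

lemma sum_sq_natIndexed {M : ℕ} (B : Matrix (Fin M) (Fin M) ℝ) :
    ∑ i ∈ range M, ∑ j ∈ range M, natIndexed B i j ^ 2 = Matrix.trace (B * Bᵀ) := by
  simp [natIndexed, Finset.sum_range, Matrix.trace, Matrix.mul_apply, sq]

/-- almost sure concentration of real quadratic forms around the trace. -/
theorem quadratic_form_ae_tendsto_zero
    {Ω : Type*} [MeasurableSpace Ω] (μ : Measure Ω) [IsProbabilityMeasure μ]
    (x : ℕ → Ω → ℝ) (hmeas : ∀ i, Measurable (x i))
    (hindep : iIndepFun x μ)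
    (hident : ∀ i, IdentDistrib (x i) (x 0) μ μ)
    (hmean : μ[x 0] = 0)
    (hvar : ∫ ω, (x 0 ω) ^ 2 ∂μ = 1)
    (hmom8 : Integrable (fun ω => |x 0 ω| ^ 8) μ)
    (C : ℝ)
    (B : (M : ℕ) → Matrix (Fin M) (Fin M) ℝ)
    (hB : ∀ M : ℕ, Matrix.trace (B M * (B M)ᵀ) ≤ C * (M : ℝ) ^ 2) :
    ∀ᵐ ω ∂μ, Tendsto
      (fun M : ℕ => (1 / (M : ℝ) ^ ((3 : ℝ) / 2)) *
        ((∑ i : Fin M, ∑ j : Fin M, x i ω * B M i j * x j ω) - Matrix.trace (B M)))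
      atTop (nhds 0) := by
  have hmoment (i : ℕ) (u : ℝ → ℝ) (hu : Measurable u) :
      ∫ ω, u (x i ω) ∂μ = ∫ ω, u (x 0 ω) ∂μ :=
    ((hident i).comp hu).integral_eq
  have hx8 (i : ℕ) : Integrable (fun ω => |x i ω| ^ 8) μ :=
    ((hident i).comp (by fun_prop : Measurable fun t : ℝ => |t| ^ 8)).integrable_iff.2 hmom8
  set κ := 8 * ∫ ω, (x 0 ω ^ 2 - 1) ^ 4 ∂μ + 128 * (∫ ω, x 0 ω ^ 4 ∂μ) ^ 2
  have hQ (M : ℕ) : ∫ ω, centeredQuadForm (natIndexed (B M)) M (fun i => x i ω) ^ 4 ∂μ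
      ≤ 64 * κ * C ^ 2 * (M : ℝ) ^ 4 := by
    refine (integral_centeredQuadForm_pow_four_le hmeas hindep
      (fun i => (hmoment i id measurable_id).trans hmean)
      (fun i => (hmoment i (· ^ 2) (by fun_prop)).trans hvar) hx8
      (fun i => (hmoment i (· ^ 4) (by fun_prop)).le)
      (fun i => (hmoment i (fun t => (t ^ 2 - 1) ^ 4) (by fun_prop)).le) _ M).trans ?_
    have htr := hB M
    rw [← sum_sq_natIndexed] at htr
    calc _ ≤ 64 * κ * (C * (M : ℝ) ^ 2) ^ 2 := by gcongr
      _ = _ := by ring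
  have hform (M : ℕ) (ω : Ω) : (∑ i : Fin M, ∑ j : Fin M, x i ω * B M i j * x j ω)
      - Matrix.trace (B M) = centeredQuadForm (natIndexed (B M)) M (fun i => x i ω) :=
    (centeredQuadForm_natIndexed (B M) (fun i => x i ω)).symm
  simp_rw [hform]
  refine ae_tendsto_zero_of_integral_pow_four_le_summable (fun M => ?_)
    ((Real.summable_one_div_nat_pow.2 one_lt_two).mul_left (64 * κ * C ^ 2))
    (fun M => integral_one_div_rpow_three_halves_mul_pow_four_le M (hQ M))
  simpa only [mul_pow] using
    (integrable_centeredQuadForm_pow_four hmeas hindep hx8 _ M).const_mul _
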